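/- For any tree T, every edge of the γ-graph T(γ) is either a cut-edge of T(γ) or is contained in a cycle of length 4 in T(γ). -/

import Mathlib

open SimpleGraph Finset

/-- The closed neighbourhood of a vertex. -/
def closedNbhd {V : Type} (G : SimpleGraph V) (x : V) : Set V :=
  {y | y = x ∨ G.Adj x y}

/-- `D` is a dominating set of `G`. -/
def isDomSet {V : Type} [Fintype V] [DecidableEq V] (G : SimpleGraph V) (D : Finset V) : Prop :=
  ∀ v : V, ∃ d ∈ D, v ∈ closedNbhd G d

/-- `D` is a minimum dominating set (γ-set) of `G`. -/
def isMinDomSet {V : Type} [Fintype V] [DecidableEq V] (G : SimpleGraph V) (D : Finset V) : Prop :=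
  isDomSet G D ∧ ∀ D' : Finset V, isDomSet G D' → D.card ≤ D'.card

/-- The set of `D`-private neighbours of `x`: vertices in `N[x]` not in the closed
neighbourhood of any other vertex of `D`. -/
def privN {V : Type} [Fintype V] [DecidableEq V] (G : SimpleGraph V) (D : Finset V) (x : V) :
    Set V :=
  {y | y ∈ closedNbhd G x ∧ ∀ z ∈ D, z ≠ x → y ∉ closedNbhd G z}

/-- The γ-graph of `G`: vertices are the γ-sets of `G`, two γ-sets adjacent iff they differ
by a swap of two adjacent vertices. -/
def gammaGraph {V : Type} [Fintype V] [DecidableEq V] (G : SimpleGraph V) :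
    SimpleGraph {D : Finset V // isMinDomSet G D} where
  Adj D₁ D₂ := D₁ ≠ D₂ ∧ ∃ u v : V, G.Adj u v ∧
    (D₂.1 = (D₁.1 \ {u}) ∪ {v} ∨ D₁.1 = (D₂.1 \ {u}) ∪ {v})
  symm := by
    constructor
    rintro D₁ D₂ ⟨hne, u, v, huv, h | h⟩
    · exact ⟨hne.symm, u, v, huv, Or.inr h⟩
    · exact ⟨hne.symm, u, v, huv, Or.inl h⟩
  loopless := by constructor; rintro D ⟨hne, -⟩; exact hne rfl

/-!
Write `D₁ = D₂ - v + u` for the edge `D₁D₂` of `T(γ)`, with `uv` an edge of `T`. If `D₁D₂` is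
not a cut-edge, some walk from `D₂` to `D₁` avoids it. Along that walk the number of vertices of
the current γ-set on `u`'s side of the bridge `uv` of `T` must grow at some step, and that step
can only move a vertex from `v` to `u`: so there is a γ-set `S ≠ D₂` containing `v`, avoiding `u`,
with `S - v + u` again a γ-set.

Given such `S`, let `w` be a vertex of `D₂ ∆ S` farthest from `v`, lying in `R` but not in `R'`
where `{R, R'} = {D₂, S}`, and let `x` be the neighbour of `w` towards `v`. A private neighbour of
`w` with respect to `R` or to `R - v + u` is dominated by `R'` from outside `R`, hence, by the
choice of `w`, lies in `N[x]`; so `w` can be exchanged for `x` in both `R` and `R - v + u`. The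
sets `R, R - w + x, R - v + u - w + x, R - v + u` then form a 4-cycle of `T(γ)`. If `R = D₂` it
passes through `D₁D₂`; if `R = S`, either `S - w + x = D₂` and it does again, or `S - w + x`
replaces `S`, with smaller total distance to `v`.
-/

namespace Finset

variable {α : Type} [DecidableEq α]

lemma insert_erase_insert_erase_comm {s : Finset α} {a b c d : α} (hac : a ≠ c) (hbd : b ≠ d) :
    insert a ((insert b (s.erase c)).erase d) = insert b ((insert a (s.erase d)).erase c) := by
  ext z
  simp only [mem_insert, mem_erase]
  grind

lemma card_filter_insert_erase (p : α → Prop) [DecidablePred p] {s : Finset α} {a b : α}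
    (ha : a ∈ s) (hb : b ∉ s) :
    #{z ∈ insert b (s.erase a) | p z} + (if p a then 1 else 0) =
      #{z ∈ s | p z} + (if p b then 1 else 0) := by
  rw [card_filter, card_filter, sum_insert (fun h => hb (mem_of_mem_erase h)),
    ← add_sum_erase s _ ha]
  omega

lemma mem_and_notMem_of_eq_insert_erase {A B : Finset α} {a b : α} (hcard : A.card = B.card)
    (hne : A ≠ B) (hB : B = insert b (A.erase a)) : a ∈ A ∧ b ∉ A := by
  by_contra h
  rw [not_and_or, not_not] at h
  rcases h with ha | hb
  · rw [erase_eq_of_notMem ha] at hB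
    exact hne (eq_of_subset_of_card_le (hB ▸ subset_insert b A) hcard.ge)
  · refine hne (eq_of_subset_of_card_le ?_ hcard.le).symm
    rw [hB]
    exact insert_subset hb (erase_subset a A)

end Finset

section Domination

variable {V : Type} [Fintype V] [DecidableEq V] {G : SimpleGraph V} {D D' : Finset V} {w x : V}

lemma privN_anti (h : D ⊆ D') : privN G D' x ⊆ privN G D x :=
  fun _ ⟨hy, hpriv⟩ => ⟨hy, fun z hz => hpriv z (h hz)⟩

lemma exists_mem_erase_of_notMem_privN {q : V} (hq : q ∈ closedNbhd G w)
    (hpriv : q ∉ privN G D w) : ∃ z ∈ D.erase w, q ∈ closedNbhd G z := by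
  simp only [privN, Set.mem_ofPred_eq, hq, true_and, not_forall, not_not] at hpriv
  obtain ⟨z, hz, hzw, hqz⟩ := hpriv
  exact ⟨z, mem_erase.2 ⟨hzw, hz⟩, hqz⟩

lemma isMinDomSet.card_eq (hD : isMinDomSet G D) (hD' : isMinDomSet G D') :
    D.card = D'.card :=
  le_antisymm (hD.2 D' hD'.1) (hD'.2 D hD.1)

lemma isMinDomSet.insert_erase (hD : isMinDomSet G D) (hw : w ∈ D) (hx : x ∉ D)
    (hdom : isDomSet G (insert x (D.erase w))) : isMinDomSet G (insert x (D.erase w)) := by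
  have hcard : (insert x (D.erase w)).card = D.card := by
    rw [card_insert_of_notMem (fun h => hx (mem_of_mem_erase h)), card_erase_add_one hw]
  exact ⟨hdom, fun D'' hD'' => hcard ▸ hD.2 D'' hD''⟩

lemma isDomSet_insert_erase_of_privN_subset (hD : isDomSet G D)
    (h : privN G D w ⊆ closedNbhd G x) : isDomSet G (insert x (D.erase w)) := by
  intro q
  obtain ⟨d, hd, hqd⟩ := hD q
  by_cases hdw : d = w
  · subst hdw
    by_cases hq : q ∈ privN G D d
    · exact ⟨x, mem_insert_self _ _, h hq⟩
    · obtain ⟨z, hz, hqz⟩ := exists_mem_erase_of_notMem_privN hqd hq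
      exact ⟨z, mem_insert_of_mem hz, hqz⟩
  · exact ⟨d, mem_insert_of_mem (mem_erase.2 ⟨hdw, hd⟩), hqd⟩

lemma isMinDomSet.privN_nonempty (hD : isMinDomSet G D) (hw : w ∈ D) :
    (privN G D w).Nonempty := by
  by_contra hempty
  have hdom : isDomSet G (D.erase w) := by
    intro q
    obtain ⟨d, hd, hqd⟩ := hD.1 q
    by_cases hdw : d = w
    · subst hdw
      exact exists_mem_erase_of_notMem_privN hqd fun hq => hempty ⟨q, hq⟩
    · exact ⟨d, mem_erase.2 ⟨hdw, hd⟩, hqd⟩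
  have := hD.2 _ hdom
  rw [card_erase_of_mem hw] at this
  have := card_pos.2 ⟨w, hw⟩
  omega

end Domination

section GammaGraph

variable {V : Type} [Fintype V] [DecidableEq V] {G : SimpleGraph V}

lemma gammaGraph_adj_iff {P Q : {D : Finset V // isMinDomSet G D}} :
    (gammaGraph G).Adj P Q ↔
      ∃ a b, G.Adj a b ∧ a ∈ P.1 ∧ b ∉ P.1 ∧ Q.1 = insert b (P.1.erase a) := by
  have hswap : ∀ {A B : Finset V} {a b : V}, B = (A \ {a}) ∪ {b} → B = insert b (A.erase a) :=
    fun h => by rw [h, union_comm, ← insert_eq, erase_eq]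
  constructor
  · rintro ⟨hne, a, b, hab, hQ | hP⟩
    · replace hQ := hswap hQ
      obtain ⟨ha, hb⟩ := mem_and_notMem_of_eq_insert_erase (isMinDomSet.card_eq P.2 Q.2)
        (Subtype.coe_injective.ne hne) hQ
      exact ⟨a, b, hab, ha, hb, hQ⟩
    · replace hP := hswap hP
      obtain ⟨ha, hb⟩ := mem_and_notMem_of_eq_insert_erase (isMinDomSet.card_eq Q.2 P.2)
        (Subtype.coe_injective.ne hne.symm) hP
      refine ⟨b, a, hab.symm, hP ▸ mem_insert_self b _, by simp [hP, hab.ne], ?_⟩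
      rw [hP, erase_insert (fun h => hb (mem_of_mem_erase h)), insert_erase ha]
  · rintro ⟨a, b, hab, ha, hb, hQ⟩
    refine ⟨fun h => hb (h ▸ hQ ▸ mem_insert_self b _), a, b, hab, Or.inl ?_⟩
    rw [hQ, union_comm, ← insert_eq, erase_eq]

end GammaGraph

namespace SimpleGraph

variable {V : Type} {G T : SimpleGraph V}

lemma IsTree.exists_adj_dist_add_one (hT : T.IsTree) {r c : V} (h : r ≠ c) :
    ∃ π, T.Adj π c ∧ T.dist r π + 1 = T.dist r c := by
  obtain ⟨p, hp⟩ := hT.connected.exists_walk_length_eq_dist r c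
  have hnil : ¬ p.Nil := fun hn => h hn.eq
  have hadj := p.adj_penultimate hnil
  have hle := dist_le p.dropLast
  rw [p.length_dropLast] at hle
  refine ⟨p.penultimate, hadj, ?_⟩
  rcases hT.dist_eq_dist_add_one_of_adj r hadj with h' | h' <;> omega

lemma IsTree.eq_of_adj_of_dist_add_one (hT : T.IsTree) {r c z₁ z₂ : V}
    (h₁ : T.Adj z₁ c) (h₂ : T.Adj z₂ c)
    (d₁ : T.dist r z₁ + 1 = T.dist r c) (d₂ : T.dist r z₂ + 1 = T.dist r c) : z₁ = z₂ := by
  obtain ⟨p₁, hp₁⟩ := hT.connected.exists_walk_length_eq_dist r z₁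
  obtain ⟨p₂, hp₂⟩ := hT.connected.exists_walk_length_eq_dist r z₂
  have hq₁ : (p₁.concat h₁).IsPath := Walk.isPath_of_length_eq_dist _ (by simp [hp₁, d₁])
  have hq₂ : (p₂.concat h₂).IsPath := Walk.isPath_of_length_eq_dist _ (by simp [hp₂, d₂])
  exact (Walk.concat_inj ((hT.existsUnique_path r c).unique hq₁ hq₂)).1

lemma IsAcyclic.eq_or_eq_of_mem_closedNbhd_of_adj (hT : T.IsAcyclic) {u v p : V}
    (huv : T.Adj u v)
    (hpu : p ∈ closedNbhd T u) (hpv : p ∈ closedNbhd T v) : p = u ∨ p = v := by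
  rcases hpu with rfl | hup
  · exact Or.inl rfl
  rcases hpv with rfl | hvp
  · exact Or.inr rfl
  classical
  exact (hT.cliqueFree le_rfl {u, v, p}
    (is3Clique_triple_iff.2 ⟨huv, hup, hvp⟩)).elim

lemma IsTree.eq_or_eq_of_mem_closedNbhd_of_dist_le (hT : T.IsTree) {r w π p s : V}
    (hπ : T.Adj π w) (hπd : T.dist r π + 1 = T.dist r w)
    (hpw : p ∈ closedNbhd T w) (hps : p ∈ closedNbhd T s) (hsw : s ≠ w)
    (hsd : T.dist r s ≤ T.dist r w) : (p = w ∧ s = π) ∨ p = π := by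
  rcases hpw with rfl | hwp
  · rcases hps with rfl | hsp
    · exact absurd rfl hsw
    have hsd' : T.dist r s + 1 = T.dist r p := by
      rcases hT.dist_eq_dist_add_one_of_adj r hsp with h | h <;> omega
    exact Or.inl ⟨rfl, hT.eq_of_adj_of_dist_add_one hsp hπ hsd' hπd⟩
  by_cases hpπ : p = π
  · exact Or.inr hpπ
  have hpd : T.dist r w + 1 = T.dist r p := by
    rcases hT.dist_eq_dist_add_one_of_adj r hwp with h | h
    · exact absurd (hT.eq_of_adj_of_dist_add_one hwp.symm hπ h.symm hπd) hpπ
    · exact h.symm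
  rcases hps with rfl | hsp
  · omega
  have hsd' : T.dist r s + 1 = T.dist r p := by
    rcases hT.dist_eq_dist_add_one_of_adj r hsp with h | h <;> omega
  exact absurd (hT.eq_of_adj_of_dist_add_one hsp hwp hsd' hpd) hsw

lemma eq_of_adj_of_reachable_deleteEdges {u v a b : V} (hab : G.Adj a b)
    (ha : ¬(G.deleteEdges {s(u, v)}).Reachable u a)
    (hb : (G.deleteEdges {s(u, v)}).Reachable u b) : a = v ∧ b = u := by
  by_cases he : s(a, b) = s(u, v)
  · rcases Sym2.eq_iff.1 he with ⟨rfl, -⟩ | h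
    · exact absurd Reachable.rfl ha
    · exact h
  · exact absurd (hb.trans (Adj.reachable (by simp [hab.symm, Sym2.eq_swap, he]))) ha

lemma Walk.exists_mem_edges_lt {β : Type*} [LinearOrder β] (f : V → β) {a b : V}
    (p : G.Walk a b) (h : f a < f b) : ∃ x y, s(x, y) ∈ p.edges ∧ f x < f y := by
  induction p with
  | nil => exact absurd h (lt_irrefl _)
  | @cons a c b hadj q ih =>
    by_cases hac : f a < f c
    · exact ⟨a, c, by simp, hac⟩
    · obtain ⟨x, y, hxy, hlt⟩ := ih (lt_of_le_of_lt (not_lt.1 hac) h)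
      exact ⟨x, y, by simp [hxy], hlt⟩

def OnFourCycle (G : SimpleGraph V) (a b : V) : Prop :=
  ∃ c d, c ≠ a ∧ c ≠ b ∧ d ≠ a ∧ d ≠ b ∧ c ≠ d ∧ G.Adj b c ∧ G.Adj c d ∧ G.Adj d a

end SimpleGraph

section Exchange

variable {V : Type} [Fintype V] [DecidableEq V] {T : SimpleGraph V} {u v : V}

open scoped symmDiff

lemma exists_mem_notMem_of_mem_privN (hT : T.IsAcyclic) (huv : T.Adj u v) {R S : Finset V}
    {w p : V} (hS : isDomSet T S) (hS' : isDomSet T (insert u (S.erase v))) (hwS : w ∉ S)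
    (hp : p ∈ privN T (R.erase v) w) (hpu : p ≠ u) (hpv : p ≠ v) :
    ∃ s ∈ S, s ∉ R ∧ p ∈ closedNbhd T s := by
  have hout : ∀ s ∈ S, s ≠ v → p ∈ closedNbhd T s → s ∉ R := fun s hs hsv hps hsR =>
    hp.2 s (mem_erase.2 ⟨hsv, hsR⟩) (fun h => hwS (h ▸ hs)) hps
  obtain ⟨s, hs, hps⟩ := hS p
  by_cases hsv : s = v
  · subst hsv
    obtain ⟨s', hs', hps'⟩ := hS' p
    rcases mem_insert.1 hs' with rfl | hs'
    · rcases hT.eq_or_eq_of_mem_closedNbhd_of_adj huv hps' hps with h | h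
      · exact absurd h hpu
      · exact absurd h hpv
    · obtain ⟨hs'v, hs'S⟩ := mem_erase.1 hs'
      exact ⟨s', hs'S, hout s' hs'S hs'v hps', hps'⟩
  · exact ⟨s, hs, hout s hs hsv hps, hps⟩

lemma eq_or_eq_of_mem_privN (hT : T.IsTree) (huv : T.Adj u v) {R S : Finset V} {w π p : V}
    (hS : isDomSet T S) (hS' : isDomSet T (insert u (S.erase v))) (hwS : w ∉ S)
    (hπw : T.Adj π w) (hπd : T.dist v π + 1 = T.dist v w)
    (hmax : ∀ z ∈ R ∆ S, T.dist v z ≤ T.dist v w)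
    (hp : p ∈ privN T (R.erase v) w) (hpu : p ≠ u) (hpv : p ≠ v) :
    (p = w ∧ π ∈ S ∧ π ∉ R) ∨ p = π := by
  obtain ⟨s, hsS, hsR, hps⟩ := exists_mem_notMem_of_mem_privN hT.isAcyclic huv hS hS' hwS hp hpu hpv
  rcases hT.eq_or_eq_of_mem_closedNbhd_of_dist_le hπw hπd hp.1 hps (fun h => hwS (h ▸ hsS))
    (hmax s (mem_symmDiff.2 (Or.inr ⟨hsS, hsR⟩))) with ⟨hpw, rfl⟩ | hpπ
  · exact Or.inl ⟨hpw, hsS, hsR⟩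
  · exact Or.inr hpπ

lemma exists_adj_isDomSet_insert_erase (hT : T.IsTree) (huv : T.Adj u v) {R S : Finset V}
    {w : V} (hR : isMinDomSet T R) (hR' : isDomSet T (insert u (R.erase v)))
    (hS : isDomSet T S) (hS' : isDomSet T (insert u (S.erase v)))
    (hvR : v ∈ R) (huR : u ∉ R) (hvS : v ∈ S) (huS : u ∉ S) (hwR : w ∈ R) (hwS : w ∉ S)
    (hmax : ∀ z ∈ R ∆ S, T.dist v z ≤ T.dist v w) :
    ∃ x, T.Adj w x ∧ x ∉ R ∧ x ≠ u ∧ T.dist v x + 1 = T.dist v w ∧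
      isDomSet T (insert x (R.erase w)) ∧
      isDomSet T (insert x ((insert u (R.erase v)).erase w)) := by
  have hwv : w ≠ v := fun h => hwS (h ▸ hvS)
  have hwu : w ≠ u := fun h => huR (h ▸ hwR)
  obtain ⟨π, hπw, hπd⟩ := hT.exists_adj_dist_add_one hwv.symm
  have hcases := fun {p} => eq_or_eq_of_mem_privN (p := p) hT huv hS hS' hwS hπw hπd hmax
  have hpriv : ∀ {D : Finset V} (z : V), R.erase v ⊆ D → z ∈ D → z ≠ w →
      u ∈ closedNbhd T z → v ∈ closedNbhd T z →
      ∀ p ∈ privN T D w, p ≠ u ∧ p ≠ v ∧ p ∈ privN T (R.erase v) w :=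
    fun z hD hz hzw hu hv p hp =>
      ⟨fun h => hp.2 z hz hzw (h ▸ hu), fun h => hp.2 z hz hzw (h ▸ hv), privN_anti hD hp⟩
  have hprivR := hpriv v (erase_subset v R) hvR hwv.symm (Or.inr huv.symm) (Or.inl rfl)
  have hprivR' := hpriv u (subset_insert u _) (mem_insert_self u _) hwu.symm (Or.inl rfl)
    (Or.inr huv)
  have hπ : π ∉ R ∧ π ≠ u := by
    obtain ⟨p, hp⟩ := hR.privN_nonempty hwR
    obtain ⟨hpu, hpv, hp'⟩ := hprivR p hp
    rcases hcases hp' hpu hpv with ⟨-, hπS, hπR⟩ | rfl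
    · exact ⟨hπR, fun h => huS (h ▸ hπS)⟩
    · exact ⟨fun hπR => hp.2 p hπR hπw.ne (Or.inl rfl), hpu⟩
  have hcover : ∀ {D : Finset V}, (∀ p ∈ privN T D w,
      p ≠ u ∧ p ≠ v ∧ p ∈ privN T (R.erase v) w) → privN T D w ⊆ closedNbhd T π := by
    intro D hD p hp
    obtain ⟨hpu, hpv, hp'⟩ := hD p hp
    rcases hcases hp' hpu hpv with ⟨rfl, -, -⟩ | rfl
    · exact Or.inr hπw
    · exact Or.inl rfl
  exact ⟨π, hπw.symm, hπ.1, hπ.2, hπd, isDomSet_insert_erase_of_privN_subset hR.1 (hcover hprivR),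
    isDomSet_insert_erase_of_privN_subset hR' (hcover hprivR')⟩

lemma onFourCycle_of_exchange (huv : T.Adj u v) {w x : V} (hwx : T.Adj w x)
    {P Q : {D : Finset V // isMinDomSet T D}} (hvP : v ∈ P.1) (huP : u ∉ P.1)
    (hwP : w ∈ P.1) (hxP : x ∉ P.1) (hwv : w ≠ v) (hxu : x ≠ u)
    (hQ : Q.1 = insert u (P.1.erase v)) (hP' : isDomSet T (insert x (P.1.erase w)))
    (hQ' : isDomSet T (insert x (Q.1.erase w))) :
    (gammaGraph T).OnFourCycle Q P := by
  have hwu : w ≠ u := fun h => huP (h ▸ hwP)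
  have hxv : x ≠ v := fun h => hxP (h ▸ hvP)
  have hwQ : w ∈ Q.1 := by simp [hQ, hwu, hwv, hwP]
  have hxQ : x ∉ Q.1 := by simp [hQ, hxu, hxP]
  let P' : {D : Finset V // isMinDomSet T D} := ⟨_, isMinDomSet.insert_erase P.2 hwP hxP hP'⟩
  let Q' : {D : Finset V // isMinDomSet T D} := ⟨_, isMinDomSet.insert_erase Q.2 hwQ hxQ hQ'⟩
  have hne : ∀ {A B : {D : Finset V // isMinDomSet T D}} {a : V}, a ∈ A.1 → a ∉ B.1 → A ≠ B :=
    fun ha hb h => hb (h ▸ ha)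
  have hvP' : v ∈ P'.1 := by simp [P', hwv.symm, hvP]
  have huP' : u ∉ P'.1 := by simp [P', hxu.symm, huP]
  have hxP' : x ∈ P'.1 := mem_insert_self x _
  have hxQ' : x ∈ Q'.1 := mem_insert_self x _
  have hvQ : v ∉ Q.1 := by simp [hQ, huv.ne.symm]
  have huQ' : u ∈ Q'.1 := by simp [Q', hQ, hwu.symm]
  refine ⟨P', Q', hne hvP' hvQ, hne hxP' hxP, hne hxQ' hxQ, hne huQ' huP, hne hvP' ?_,
    gammaGraph_adj_iff.2 ⟨w, x, hwx, hwP, hxP, rfl⟩,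
    gammaGraph_adj_iff.2 ⟨v, u, huv.symm, hvP', huP', ?_⟩,
    gammaGraph_adj_iff.2 ⟨x, w, hwx.symm, hxQ', ?_, ?_⟩⟩
  · simp [Q', hQ, hxv.symm, huv.ne']
  · simp only [Q', P', hQ]
    exact insert_erase_insert_erase_comm hxv hwu.symm
  · simp [Q', hwx.ne]
  · rw [erase_insert (fun h => hxQ (mem_of_mem_erase h)), insert_erase hwQ]

lemma onFourCycle_of_swappable (hT : T.IsTree) (huv : T.Adj u v)
    {D₁ D₂ : {D : Finset V // isMinDomSet T D}} (hvD : v ∈ D₂.1) (huD : u ∉ D₂.1)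
    (hD₁ : D₁.1 = insert u (D₂.1.erase v)) {S : Finset V} (hS : isMinDomSet T S) (hvS : v ∈ S)
    (huS : u ∉ S) (hS' : isDomSet T (insert u (S.erase v))) (hne : S ≠ D₂.1) :
    (gammaGraph T).OnFourCycle D₁ D₂ := by
  have hD₂' : isDomSet T (insert u (D₂.1.erase v)) := hD₁ ▸ D₁.2.1
  induction hn : ∑ z ∈ S, T.dist v z using Nat.strong_induction_on generalizing S with
  | _ n ih =>
  obtain ⟨w, hw, hwmax⟩ := exists_max_image (D₂.1 ∆ S) (T.dist v) (symmDiff_nonempty.2 hne.symm)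
  rcases mem_symmDiff.1 hw with ⟨hwD, hwS⟩ | ⟨hwS, hwD⟩
  · obtain ⟨x, hwx, hxD, hxu, -, hdom, hdom'⟩ := exists_adj_isDomSet_insert_erase hT huv D₂.2
      hD₂' hS.1 hS' hvD huD hvS huS hwD hwS hwmax
    exact onFourCycle_of_exchange huv hwx hvD huD hwD hxD (fun h => hwS (h ▸ hvS)) hxu hD₁ hdom
      (hD₁ ▸ hdom')
  · obtain ⟨x, hwx, hxS, hxu, hxd, hdom, hdom'⟩ := exists_adj_isDomSet_insert_erase hT huv hS
      hS' D₂.2.1 hD₂' hvS huS hvD huD hwS hwD (fun z hz => hwmax z (symmDiff_comm S _ ▸ hz))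
    have hwv : w ≠ v := fun h => hwD (h ▸ hvD)
    have hxv : x ≠ v := fun h => hxS (h ▸ hvS)
    have hxw : x ∉ S.erase w := fun h => hxS (mem_of_mem_erase h)
    have hwu : w ≠ u := fun h => huS (h ▸ hwS)
    have hcomm := insert_erase_insert_erase_comm (s := S) hwu.symm hxv
    by_cases hS₂ : insert x (S.erase w) = D₂.1
    · have hxD : x ∈ D₂.1 := hS₂ ▸ mem_insert_self x _
      have hback : insert w (D₂.1.erase x) = S := by
        rw [← hS₂, erase_insert hxw, insert_erase hwS]
      refine onFourCycle_of_exchange huv hwx.symm hvD huD hxD hwD hxv hwu hD₁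
        (hback ▸ hS.1) ?_
      rw [hD₁, ← hS₂, hcomm, erase_insert (by simp [hxu, hxS]), insert_erase (by simp [hwv, hwS])]
      exact hS'
    · have hlt : ∑ z ∈ insert x (S.erase w), T.dist v z < n := by
        rw [← hn, sum_insert hxw, ← add_sum_erase S _ hwS]
        omega
      refine ih _ hlt (hS.insert_erase hwS hxS hdom) ?_ ?_ ?_ hS₂ rfl
      · simp [hxv.symm, hwv.symm, hvS]
      · simp [hxu.symm, huS]
      · rwa [← hcomm] at hdom'

lemma exists_swappable_of_not_isBridge (huv : T.IsBridge s(u, v))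
    {D₁ D₂ : {D : Finset V // isMinDomSet T D}} (hvD : v ∈ D₂.1) (huD : u ∉ D₂.1)
    (hD₁ : D₁.1 = insert u (D₂.1.erase v)) (hbr : ¬(gammaGraph T).IsBridge s(D₁, D₂)) :
    ∃ S : {D : Finset V // isMinDomSet T D}, v ∈ S.1 ∧ u ∉ S.1 ∧
      isDomSet T (insert u (S.1.erase v)) ∧ S ≠ D₂ := by
  classical
  let H := T.deleteEdges {s(u, v)}
  let f : {D : Finset V // isMinDomSet T D} → ℕ := fun Y => #{z ∈ Y.1 | H.Reachable u z}
  have hv : ¬H.Reachable u v := isBridge_iff.1 huv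
  have hf : f D₂ < f D₁ := by
    have := card_filter_insert_erase (H.Reachable u) hvD huD
    simp only [hv, if_false, Reachable.rfl, if_true] at this
    simp only [f, hD₁]
    omega
  rw [isBridge_iff_forall_walk_mem_edges] at hbr
  push Not at hbr
  obtain ⟨p, hp⟩ := hbr
  obtain ⟨X, Y, hXY, hlt⟩ := p.reverse.exists_mem_edges_lt f hf
  obtain ⟨a, b, hab, haX, hbX, hY⟩ := gammaGraph_adj_iff.1 (p.reverse.adj_of_mem_edges hXY)
  have hcount := card_filter_insert_erase (H.Reachable u) haX hbX
  simp only [f, hY] at hlt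
  have hb : H.Reachable u b := by by_contra hb; split_ifs at hcount <;> omega
  have ha : ¬H.Reachable u a := by intro ha; split_ifs at hcount; omega
  obtain ⟨rfl, rfl⟩ := eq_of_adj_of_reachable_deleteEdges hab ha hb
  refine ⟨X, haX, hbX, hY ▸ Y.2.1, ?_⟩
  rintro rfl
  obtain rfl : Y = D₁ := Subtype.ext (hY.trans hD₁.symm)
  exact hp (by simpa [Sym2.eq_swap] using hXY)

end Exchange

theorem stmt17 {V : Type} [Fintype V] [DecidableEq V] (T : SimpleGraph V) (hT : T.IsTree)
    (D₁ D₂ : {D : Finset V // isMinDomSet T D}) (h : (gammaGraph T).Adj D₁ D₂) :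
    (gammaGraph T).IsBridge s(D₁, D₂) ∨
      ∃ D₃ D₄ : {D : Finset V // isMinDomSet T D},
        D₃ ≠ D₁ ∧ D₃ ≠ D₂ ∧ D₄ ≠ D₁ ∧ D₄ ≠ D₂ ∧ D₃ ≠ D₄ ∧
          (gammaGraph T).Adj D₂ D₃ ∧ (gammaGraph T).Adj D₃ D₄ ∧
            (gammaGraph T).Adj D₄ D₁ := by
  refine or_iff_not_imp_left.2 fun hbr => ?_
  obtain ⟨v, u, hvu, hvD, huD, hD₁⟩ := gammaGraph_adj_iff.1 h.symm
  obtain ⟨S, hvS, huS, hS', hne⟩ :=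
    exists_swappable_of_not_isBridge (isAcyclic_iff_forall_adj_isBridge.1 hT.isAcyclic hvu.symm)
      hvD huD hD₁ hbr
  exact onFourCycle_of_swappable hT hvu.symm hvD huD hD₁ S.2 hvS huS hS'
    (Subtype.coe_injective.ne hne)
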